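/- arXiv:1405.4712 — 2 statements merged into one kernel-verified Lean document; each statement's English description precedes it below -/
import Mathlib

section
/- Let ν > 1/2 and define λ_ν(x) = ∑_{n≥0} (2n+1) x^{2n} / (4^n · n! · (ν+1)_n). Then λ_ν(x) < cosh x for all x > 0. -/
/-!
Since `(2n+1)! = 4^n n! (3/2)_n`, the `n`-th term of `λ_ν(x)` is the `n`-th term `x^{2n}/(2n)!`
of `cosh x` multiplied by `(3/2)_n / (ν+1)_n`. The Pochhammer symbol is monotone on `[0, ∞)`,
strictly so for `n ≥ 1`, so for `ν > 1/2` this ratio lies in `(0, 1]` and is `< 1` at `n = 1`.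
-/

noncomputable def lam (ν x : ℝ) : ℝ :=
  ∑' n : ℕ, (2 * (n : ℝ) + 1) * x ^ (2 * n) /
    ((4 : ℝ) ^ n * (n.factorial : ℝ) * (ascPochhammer ℝ n).eval (ν + 1))

open Polynomial Nat

section OrderedSemiring

variable {S : Type*} [Semiring S] [PartialOrder S] [IsOrderedRing S]

theorem ascPochhammer_eval_nonneg (n : ℕ) {s : S} (hs : 0 ≤ s) :
    0 ≤ (ascPochhammer S n).eval s := by
  induction n with
  | zero => simp
  | succ n ih =>
    rw [ascPochhammer_succ_eval]
    exact mul_nonneg ih (add_nonneg hs n.cast_nonneg)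

theorem ascPochhammer_eval_le_eval (n : ℕ) {a b : S} (ha : 0 ≤ a) (hab : a ≤ b) :
    (ascPochhammer S n).eval a ≤ (ascPochhammer S n).eval b := by
  induction n with
  | zero => simp
  | succ n ih =>
    simp only [ascPochhammer_succ_eval]
    exact mul_le_mul ih (add_le_add_left hab _) (add_nonneg ha n.cast_nonneg)
      (ascPochhammer_eval_nonneg n (ha.trans hab))

end OrderedSemiring

theorem ascPochhammer_eval_lt_eval {S : Type*} [Semiring S] [PartialOrder S]
    [IsStrictOrderedRing S] {n : ℕ} (hn : n ≠ 0) {a b : S} (ha : 0 ≤ a) (hab : a < b) :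
    (ascPochhammer S n).eval a < (ascPochhammer S n).eval b := by
  obtain ⟨n, rfl⟩ := Nat.exists_eq_succ_of_ne_zero hn
  simp only [ascPochhammer_succ_eval]
  exact mul_lt_mul' (ascPochhammer_eval_le_eval n ha hab.le) (add_lt_add_left hab _)
    (add_nonneg ha n.cast_nonneg) (ascPochhammer_pos n b (ha.trans_lt hab))

theorem four_pow_mul_factorial_mul_ascPochhammer_eval_three_halves {K : Type*} [Field K]
    [CharZero K] (n : ℕ) :
    4 ^ n * n ! * (ascPochhammer K n).eval (3 / 2) = ((2 * n + 1)! : K) := by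
  induction n with
  | zero => simp
  | succ n ih =>
    rw [ascPochhammer_succ_eval, show 2 * (n + 1) + 1 = (2 * n + 1 + 1) + 1 by ring,
      factorial_succ, factorial_succ, factorial_succ]
    push_cast
    rw [← ih]
    ring

theorem lam_summand_eq_cosh_summand_mul (ν x : ℝ) (n : ℕ) :
    (2 * (n : ℝ) + 1) * x ^ (2 * n) / (4 ^ n * n ! * (ascPochhammer ℝ n).eval (ν + 1)) =
      x ^ (2 * n) / (2 * n)! *
        ((ascPochhammer ℝ n).eval (3 / 2) / (ascPochhammer ℝ n).eval (ν + 1)) := by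
  have h := four_pow_mul_factorial_mul_ascPochhammer_eval_three_halves (K := ℝ) n
  rw [factorial_succ] at h
  push_cast at h
  have hfac : ((2 * n)! : ℝ) ≠ 0 := by positivity
  have h' : (ascPochhammer ℝ n).eval (3 / 2) = (2 * n + 1) * (2 * n)! / (4 ^ n * n !) := by
    rw [← h]; field_simp
  rw [h', div_div, mul_div_assoc', div_mul_eq_mul_div, ← mul_assoc, mul_div_cancel_right₀ _ hfac,
    mul_comm (x ^ _)]

theorem stmt_3 (ν : ℝ) (hν : 1/2 < ν) (x : ℝ) (hx : 0 < x) :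
    lam ν x < Real.cosh x := by
  have hP : ∀ n, 0 < (ascPochhammer ℝ n).eval (ν + 1) :=
    fun n ↦ ascPochhammer_pos n _ (by linarith)
  have hP' : ∀ n, 0 < (ascPochhammer ℝ n).eval (3 / 2 : ℝ) :=
    fun n ↦ ascPochhammer_pos n _ (by norm_num)
  rw [lam, Real.cosh_eq_tsum]
  refine Summable.tsum_lt_tsum_of_nonneg (i := 1) (fun n ↦ ?_) (fun n ↦ ?_) ?_
    (Real.hasSum_cosh x).summable
  all_goals rw [lam_summand_eq_cosh_summand_mul]
  · exact mul_nonneg (by positivity) (div_nonneg (hP' n).le (hP n).le)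
  · refine mul_le_of_le_one_right (by positivity) ((div_le_one (hP n)).2 ?_)
    exact ascPochhammer_eval_le_eval n (by norm_num) (by linarith)
  · refine mul_lt_of_lt_one_right (by positivity) ((div_lt_one (hP 1)).2 ?_)
    exact ascPochhammer_eval_lt_eval one_ne_zero (by norm_num) (by linarith)
end

section
/- Let ν > 1/2 and define λ_ν(x) = ∑_{n≥0} (2n+1) x^{2n} / (4^n · n! · (ν+1)_n). Then x ↦ λ_ν(x)/cosh x is strictly decreasing on (0,∞), and if -1 < ν < 1/2 it is strictly increasing on (0,∞). -/
theorem tsum_pos_of_add_swap_pos {α : Type*} {f : α × α → ℝ} (hf : Summable f)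
    (h : ∀ p, 0 ≤ f p + f p.swap) (p₀ : α × α) (hp₀ : 0 < f p₀ + f p₀.swap) :
    0 < ∑' p, f p := by
  have hswap : Summable fun p : α × α => f p.swap :=
    (Equiv.prodComm α α).summable_iff.2 hf
  have hsum : ∑' p, (f p + f p.swap) = 2 * ∑' p, f p := by
    rw [hf.tsum_add hswap, two_mul, ← (Equiv.prodComm α α).tsum_eq f]
    rfl
  linarith [(hf.add hswap).tsum_pos h p₀ hp₀]

theorem pow_mul_pow_le_pow_mul_pow {R : Type*} [CommSemiring R] [PartialOrder R] [IsOrderedRing R]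
    {s t : R} (hs : 0 ≤ s) (hst : s ≤ t) {m n : ℕ} (hmn : m ≤ n) :
    s ^ n * t ^ m ≤ s ^ m * t ^ n := by
  obtain ⟨k, rfl⟩ := Nat.exists_eq_add_of_le hmn
  calc s ^ (m + k) * t ^ m = s ^ m * t ^ m * s ^ k := by ring
    _ ≤ s ^ m * t ^ m * t ^ k := by
        gcongr
        exact mul_nonneg (pow_nonneg hs m) (pow_nonneg (hs.trans hst) m)
    _ = s ^ m * t ^ (m + k) := by ring

theorem tsum_mul_tsum_lt_of_strictAnti_div {c d : ℕ → ℝ} (hd : ∀ n, 0 < d n)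
    (hcd : StrictAnti fun n => c n / d n) {s t : ℝ} (hs : 0 ≤ s) (hst : s < t)
    (hcs : Summable fun n => c n * s ^ n) (hct : Summable fun n => c n * t ^ n)
    (hds : Summable fun n => d n * s ^ n) (hdt : Summable fun n => d n * t ^ n) :
    (∑' n, c n * t ^ n) * (∑' n, d n * s ^ n) <
      (∑' n, c n * s ^ n) * (∑' n, d n * t ^ n) := by
  have hcross : ∀ m n, m ≤ n → 0 ≤ c m * d n - c n * d m := fun m n hmn => by
    have := hcd.antitone hmn
    rw [div_le_div_iff₀ (hd n) (hd m)] at this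
    linarith
  have hpow : ∀ m n, m ≤ n → 0 ≤ s ^ m * t ^ n - s ^ n * t ^ m := fun m n hmn =>
    sub_nonneg.2 (pow_mul_pow_le_pow_mul_pow hs hst.le hmn)
  rw [← sub_pos, tsum_mul_tsum_of_summable_norm hcs.norm hdt.norm,
    tsum_mul_tsum_of_summable_norm hct.norm hds.norm,
    ← (summable_mul_of_summable_norm hcs.norm hdt.norm).tsum_sub
      (summable_mul_of_summable_norm hct.norm hds.norm)]
  have hpair : ∀ m n : ℕ,
      (c m * s ^ m * (d n * t ^ n) - c m * t ^ m * (d n * s ^ n)) +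
        (c n * s ^ n * (d m * t ^ m) - c n * t ^ n * (d m * s ^ m)) =
      (c m * d n - c n * d m) * (s ^ m * t ^ n - s ^ n * t ^ m) := fun m n => by ring
  refine tsum_pos_of_add_swap_pos ((summable_mul_of_summable_norm hcs.norm hdt.norm).sub
    (summable_mul_of_summable_norm hct.norm hds.norm)) (fun ⟨m, n⟩ => ?_) (0, 1) ?_
  · simp only [Prod.swap_prod_mk, hpair]
    rcases le_total m n with hmn | hnm
    · exact mul_nonneg (hcross m n hmn) (hpow m n hmn)
    · have := mul_nonneg (hcross n m hnm) (hpow n m hnm)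
      linarith
  · simp only [Prod.swap_prod_mk, hpair]
    refine mul_pos ?_ (by simpa using hst)
    have := hcd zero_lt_one
    rw [div_lt_div_iff₀ (hd 1) (hd 0)] at this
    linarith

theorem strictAntiOn_tsum_div_tsum {c d : ℕ → ℝ} (hd : ∀ n, 0 < d n)
    (hcd : StrictAnti fun n => c n / d n) (hc : ∀ t, 0 ≤ t → Summable fun n => c n * t ^ n)
    (hds : ∀ t, 0 ≤ t → Summable fun n => d n * t ^ n) :
    StrictAntiOn (fun t => (∑' n, c n * t ^ n) / ∑' n, d n * t ^ n) (Set.Ici 0) := by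
  intro s (hs : 0 ≤ s) t (ht : 0 ≤ t) hst
  have hpos : ∀ t, 0 ≤ t → 0 < ∑' n, d n * t ^ n := fun t ht =>
    (hds t ht).tsum_pos (fun n => mul_nonneg (hd n).le (pow_nonneg ht n)) 0 (by simpa using hd 0)
  rw [div_lt_div_iff₀ (hpos t ht) (hpos s hs)]
  exact tsum_mul_tsum_lt_of_strictAnti_div hd hcd hs hst (hc s hs) (hc t ht) (hds s hs) (hds t ht)

theorem strictMonoOn_tsum_div_tsum {c d : ℕ → ℝ} (hd : ∀ n, 0 < d n)
    (hcd : StrictMono fun n => c n / d n) (hc : ∀ t, 0 ≤ t → Summable fun n => c n * t ^ n)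
    (hds : ∀ t, 0 ≤ t → Summable fun n => d n * t ^ n) :
    StrictMonoOn (fun t => (∑' n, c n * t ^ n) / ∑' n, d n * t ^ n) (Set.Ici 0) := by
  have hneg := (strictAntiOn_tsum_div_tsum (c := fun n => -c n) hd
    (fun m n hmn => by simpa [neg_div] using hcd hmn)
    (fun t ht => by simpa [neg_mul] using (hc t ht).neg) hds).neg
  simpa only [neg_mul, tsum_neg, neg_div, neg_neg] using hneg

noncomputable def lamCoeff (ν : ℝ) (n : ℕ) : ℝ :=
  (2 * (n : ℝ) + 1) / ((4 : ℝ) ^ n * (n.factorial : ℝ) * (ascPochhammer ℝ n).eval (ν + 1))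

noncomputable def coshCoeff (n : ℕ) : ℝ := ((2 * n).factorial : ℝ)⁻¹

theorem lam_eq_tsum (ν x : ℝ) : lam ν x = ∑' n, lamCoeff ν n * (x ^ 2) ^ n := by
  unfold lam lamCoeff
  congr 1 with n
  rw [pow_mul, mul_div_right_comm]

theorem cosh_eq_tsum_coshCoeff (x : ℝ) : Real.cosh x = ∑' n, coshCoeff n * (x ^ 2) ^ n := by
  simp only [Real.cosh_eq_tsum, coshCoeff, ← pow_mul, div_eq_inv_mul]

theorem summable_coshCoeff_mul_pow {t : ℝ} (ht : 0 ≤ t) :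
    Summable fun n => coshCoeff n * t ^ n := by
  refine (Real.hasSum_cosh √t).summable.congr fun n => ?_
  rw [pow_mul, Real.sq_sqrt ht, coshCoeff, div_eq_inv_mul]

theorem coshCoeff_pos (n : ℕ) : 0 < coshCoeff n := by
  unfold coshCoeff; positivity

section

variable {ν : ℝ}

theorem lamCoeff_pos (hν : -1 < ν) (n : ℕ) : 0 < lamCoeff ν n := by
  have := ascPochhammer_pos n (ν + 1) (by linarith)
  unfold lamCoeff; positivity

theorem lamCoeff_div_coshCoeff_succ (hν : -1 < ν) (n : ℕ) :
    lamCoeff ν (n + 1) / coshCoeff (n + 1) * (2 * (ν + 1 + n)) =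
      lamCoeff ν n / coshCoeff n * (2 * n + 3) := by
  have hP := (ascPochhammer_pos n (ν + 1) (by linarith)).ne'
  have hν' : ν + 1 + (n : ℝ) ≠ 0 := by linarith [Nat.cast_nonneg (α := ℝ) n]
  have h2n : 2 * (n + 1) = 2 * n + 1 + 1 := by ring
  simp only [lamCoeff, coshCoeff, ascPochhammer_succ_eval]
  rw [h2n, Nat.factorial_succ, Nat.factorial_succ, Nat.factorial_succ]
  push_cast
  field_simp
  ring

theorem strictAnti_lamCoeff_div_coshCoeff (hν : 1 / 2 < ν) :
    StrictAnti fun n => lamCoeff ν n / coshCoeff n := by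
  refine strictAnti_nat_of_succ_lt fun n => ?_
  have hν1 : -1 < ν := by linarith
  have hrec := lamCoeff_div_coshCoeff_succ hν1 n
  have hpos := div_pos (lamCoeff_pos hν1 n) (coshCoeff_pos n)
  have hn : (0 : ℝ) ≤ n := n.cast_nonneg
  nlinarith

theorem strictMono_lamCoeff_div_coshCoeff (hν : -1 < ν) (hν' : ν < 1 / 2) :
    StrictMono fun n => lamCoeff ν n / coshCoeff n := by
  refine strictMono_nat_of_lt_succ fun n => ?_
  have hrec := lamCoeff_div_coshCoeff_succ hν n
  have hpos := div_pos (lamCoeff_pos hν n) (coshCoeff_pos n)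
  have hn : (0 : ℝ) ≤ n := n.cast_nonneg
  nlinarith

-- `1 + 3 / (2 * (ν + 1))` bounds every ratio `(2 * n + 3) / (2 * (ν + 1 + n))`.
theorem lamCoeff_div_coshCoeff_le_pow (hν : -1 < ν) (n : ℕ) :
    lamCoeff ν n / coshCoeff n ≤ (1 + 3 / (2 * (ν + 1))) ^ n := by
  induction n with
  | zero => simp [lamCoeff, coshCoeff]
  | succ n ih =>
    have hrec := lamCoeff_div_coshCoeff_succ hν n
    have hpos := div_pos (lamCoeff_pos hν n) (coshCoeff_pos n)
    have hn : (0 : ℝ) ≤ n := n.cast_nonneg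
    have hK : 2 * (n : ℝ) + 3 ≤ (1 + 3 / (2 * (ν + 1))) * (2 * (ν + 1 + n)) := by
      have hν1 : 0 < ν + 1 := by linarith
      have : 0 ≤ 3 * n / (ν + 1) := by positivity
      have e : (1 + 3 / (2 * (ν + 1))) * (2 * (ν + 1 + n)) =
          2 * (ν + 1 + n) + 3 + 3 * n / (ν + 1) := by
        field_simp
        ring
      linarith
    have h2 : 0 < 2 * (ν + 1 + n) := by linarith
    rw [← mul_le_mul_iff_of_pos_right h2, hrec, pow_succ, mul_assoc]
    exact mul_le_mul ih hK (by positivity) (hpos.le.trans ih)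

theorem summable_lamCoeff_mul_pow (hν : -1 < ν) {t : ℝ} (ht : 0 ≤ t) :
    Summable fun n => lamCoeff ν n * t ^ n := by
  set K := 1 + 3 / (2 * (ν + 1))
  have hν1 : 0 < ν + 1 := by linarith
  have hK : 0 ≤ K := by positivity
  refine (summable_coshCoeff_mul_pow (mul_nonneg hK ht)).of_nonneg_of_le
    (fun n => mul_nonneg (lamCoeff_pos hν n).le (pow_nonneg ht n)) fun n => ?_
  calc lamCoeff ν n * t ^ n = lamCoeff ν n / coshCoeff n * coshCoeff n * t ^ n := by
        rw [div_mul_cancel₀ _ (coshCoeff_pos n).ne']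
    _ ≤ K ^ n * coshCoeff n * t ^ n := by
        gcongr
        · exact (coshCoeff_pos n).le
        · exact lamCoeff_div_coshCoeff_le_pow hν n
    _ = coshCoeff n * (K * t) ^ n := by rw [mul_pow]; ring

end

theorem stmt_7 (ν : ℝ) :
    (1/2 < ν → StrictAntiOn (fun x => lam ν x / Real.cosh x) (Set.Ioi 0)) ∧
    (-1 < ν ∧ ν < 1/2 → StrictMonoOn (fun x => lam ν x / Real.cosh x) (Set.Ioi 0)) := by
  have hratio : (fun x => lam ν x / Real.cosh x) =
      (fun t => (∑' n, lamCoeff ν n * t ^ n) / ∑' n, coshCoeff n * t ^ n) ∘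
        fun x => x ^ 2 := by
    ext x
    simp only [Function.comp_apply, lam_eq_tsum, cosh_eq_tsum_coshCoeff]
  have hsq : StrictMonoOn (fun x : ℝ => x ^ 2) (Set.Ioi 0) :=
    (pow_left_strictMonoOn₀ two_ne_zero).mono Set.Ioi_subset_Ici_self
  have hmaps : Set.MapsTo (fun x : ℝ => x ^ 2) (Set.Ioi 0) (Set.Ici 0) :=
    fun x _ => sq_nonneg x
  rw [hratio]
  refine ⟨fun hν => ?_, fun ⟨hν, hν'⟩ => ?_⟩
  · exact (strictAntiOn_tsum_div_tsum coshCoeff_pos (strictAnti_lamCoeff_div_coshCoeff hν)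
      (fun _ => summable_lamCoeff_mul_pow (by linarith)) fun _ => summable_coshCoeff_mul_pow)
      |>.comp_strictMonoOn hsq hmaps
  · exact (strictMonoOn_tsum_div_tsum coshCoeff_pos (strictMono_lamCoeff_div_coshCoeff hν hν')
      (fun _ => summable_lamCoeff_mul_pow hν) fun _ => summable_coshCoeff_mul_pow).comp
      hsq hmaps
end
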